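/- arXiv:2210.15959 — 3 statements merged into one kernel-verified Lean document; each statement's English description precedes it below -/
import Mathlib

section
/- Let ε > 0, h > 0, and let m be a real number. Define Λ(x) := 2·(sinh(εh/2)/sinh(εh))·cosh(ε(x−m)) for x ∈ [m − h/2, m + h/2]. Then Λ(x) ≤ 1 for all x in this interval, with equality exactly at the endpoints x = m ± h/2. -/
theorem lebesgue_function_le_one (ε h m : ℝ) (hε : 0 < ε) (hh : 0 < h)
    (Λ : ℝ → ℝ)
    (hΛ : ∀ x, Λ x = 2 * (Real.sinh (ε * h / 2) / Real.sinh (ε * h)) *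
      Real.cosh (ε * (x - m))) :
    ∀ x ∈ Set.Icc (m - h / 2) (m + h / 2),
      Λ x ≤ 1 ∧ (Λ x = 1 ↔ x = m - h / 2 ∨ x = m + h / 2) := by
  intro x hx
  have hεh2 : 0 < ε * h / 2 := by positivity
  have hs2 : 0 < Real.sinh (ε * h / 2) := Real.sinh_pos_iff.2 hεh2
  have hc2 : 0 < Real.cosh (ε * h / 2) := Real.cosh_pos _
  have hdbl : Real.sinh (ε * h) =
      2 * Real.sinh (ε * h / 2) * Real.cosh (ε * h / 2) := by
    rw [show ε * h = 2 * (ε * h / 2) by ring, Real.sinh_two_mul]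
    norm_num
  have hΛx : Λ x = Real.cosh (ε * (x - m)) / Real.cosh (ε * h / 2) := by
    rw [hΛ, hdbl]
    field_simp
  have habs : |ε * (x - m)| ≤ |ε * h / 2| := by
    rw [abs_of_pos hεh2, abs_mul, abs_of_pos hε]
    rw [mul_div_assoc]
    refine mul_le_mul_of_nonneg_left ?_ hε.le
    rw [abs_le]
    constructor <;> [linarith [hx.1]; linarith [hx.2]]
  constructor
  · rw [hΛx, div_le_one hc2]
    exact Real.cosh_le_cosh.2 habs
  · rw [hΛx, div_eq_one_iff_eq hc2.ne']
    constructor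
    · intro hcc
      have habs2 : |ε * (x - m)| = |ε * h / 2| := by
        rcases lt_or_eq_of_le habs with hlt | heq
        · exact absurd hcc (Real.cosh_lt_cosh.2 hlt).ne
        · exact heq
      rw [abs_of_pos hεh2, abs_mul, abs_of_pos hε] at habs2
      have hxm : |x - m| = h / 2 := by
        have := mul_left_cancel₀ hε.ne' (by linarith : ε * |x - m| = ε * (h / 2))
        linarith
      rcases (abs_eq (by positivity : (0:ℝ) ≤ h / 2)).1 hxm with h1 | h1
      · right; linarith
      · left; linarith
    · rintro (rfl | rfl)
      · rw [show ε * (m - h / 2 - m) = -(ε * h / 2) by ring, Real.cosh_neg]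
      · congr 1; ring
end

section
/- Let ε > 0 and let a < b be points in [0,1]. Define P(x)² := sinh(ε(x−a))·sinh(ε(b−x))/(ε·sinh(ε(b−a))) for x ∈ [a,b]. Then P(x)² ≥ 0 on [a,b], P(a)² = P(b)² = 0, and the unique maximizer of P² on [a,b] is the midpoint x* = (a+b)/2, where P(x*)² = tanh(ε(b−a)/2)/(2ε). -/
lemma sinh_mul_sinh' (u v : ℝ) :
    Real.sinh u * Real.sinh v = (Real.cosh (u + v) - Real.cosh (u - v)) / 2 := by
  rw [Real.cosh_add, Real.cosh_sub]; ring

theorem power_function_max (ε a b : ℝ) (hε : 0 < ε) (hab : a < b)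
    (ha : 0 ≤ a) (hb : b ≤ 1) (P2 : ℝ → ℝ)
    (hP2 : ∀ x, P2 x =
      Real.sinh (ε * (x - a)) * Real.sinh (ε * (b - x)) / (ε * Real.sinh (ε * (b - a)))) :
    (∀ x ∈ Set.Icc a b, 0 ≤ P2 x) ∧
    P2 a = 0 ∧ P2 b = 0 ∧
    P2 ((a + b) / 2) = Real.tanh (ε * (b - a) / 2) / (2 * ε) ∧
    (∀ x ∈ Set.Icc a b, x ≠ (a + b) / 2 → P2 x < P2 ((a + b) / 2)) := by
  have hL : 0 < ε * (b - a) := mul_pos hε (by linarith)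
  have hsL : 0 < Real.sinh (ε * (b - a)) := Real.sinh_pos_iff.mpr hL
  have hD : 0 < ε * Real.sinh (ε * (b - a)) := mul_pos hε hsL
  have hmid : P2 ((a + b) / 2) = Real.tanh (ε * (b - a) / 2) / (2 * ε) := by
    rw [hP2]
    set t := ε * (b - a) / 2 with ht
    have ht1 : ε * ((a + b) / 2 - a) = t := by rw [ht]; ring
    have ht2 : ε * (b - (a + b) / 2) = t := by rw [ht]; ring
    have ht3 : ε * (b - a) = 2 * t := by rw [ht]; ring
    have htpos : 0 < t := by rw [ht]; linarith
    have hcosh : 0 < Real.cosh t := Real.cosh_pos t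
    rw [ht1, ht2, ht3, Real.sinh_two_mul, Real.tanh_eq_sinh_div_cosh]
    have hst : 0 < Real.sinh t := Real.sinh_pos_iff.mpr htpos
    field_simp
  refine ⟨?_, ?_, ?_, hmid, ?_⟩
  · intro x hx
    rw [hP2]
    apply div_nonneg (mul_nonneg ?_ ?_) hD.le
    · exact Real.sinh_nonneg_iff.mpr (by nlinarith [hx.1])
    · exact Real.sinh_nonneg_iff.mpr (by nlinarith [hx.2])
  · rw [hP2]; simp
  · rw [hP2]; simp
  · intro x hx hne
    rw [hP2 x, hP2 ((a + b) / 2)]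
    have ht1 : ε * ((a + b) / 2 - a) = ε * (b - a) / 2 := by ring
    have ht2 : ε * (b - (a + b) / 2) = ε * (b - a) / 2 := by ring
    rw [ht1, ht2]
    have key : Real.sinh (ε * (x - a)) * Real.sinh (ε * (b - x)) <
        Real.sinh (ε * (b - a) / 2) * Real.sinh (ε * (b - a) / 2) := by
      rw [sinh_mul_sinh', sinh_mul_sinh']
      have h1 : ε * (x - a) + ε * (b - x) = ε * (b - a) := by ring
      have h2 : ε * (b - a) / 2 + ε * (b - a) / 2 = ε * (b - a) := by ring
      have h3 : ε * (b - a) / 2 - ε * (b - a) / 2 = 0 := by ring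
      rw [h1, h2, h3, Real.cosh_zero]
      have hne' : ε * (x - a) - ε * (b - x) ≠ 0 := by
        intro h
        have h2' : ε * (x - (a + b) / 2) = 0 := by linear_combination h / 2
        rcases mul_eq_zero.mp h2' with h' | h'
        · exact absurd h' hε.ne'
        · exact hne (by linarith)
      have := Real.one_lt_cosh.mpr hne'
      linarith
    gcongr
end

section
/- Let ε > 0 and 0 ≤ a < b ≤ 1 with h := b − a. For all x ∈ [a,b], |sinh(ε(x−a))/sinh(ε(b−a)) − (x−a)/(b−a)| ≤ (ε²h²)/3 · exp(εh) (and in particular the bound ε²h²/3 when εh ≤ 1 up to the factor e). -/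
/-!
Write `r = sinh - id`. The Taylor series gives `0 ≤ r s ≤ s³ cosh s / 6` for `s ≥ 0`, and with
`t = ε (x - a)`, `T = ε (b - a)` the difference to bound is `(r t · T - r T · t) / (T sinh T)`.
Both products lie in `[0, T⁴ cosh T / 6]`, while `T sinh T ≥ T²`, which gives
`T² cosh T / 6 ≤ T² exp T / 3`.
-/

open Real Nat

theorem sinh_sub_self_le_mul_cosh {t : ℝ} (ht : 0 ≤ t) : sinh t - t ≤ t ^ 3 / 6 * cosh t := by
  have htail : HasSum (fun n : ℕ => t ^ (2 * n + 3) / ↑(2 * n + 3)!) (sinh t - t) := by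
    simpa [mul_add, add_assoc] using (hasSum_nat_add_iff' 1).mpr (hasSum_sinh t)
  refine hasSum_le (fun n => ?_) htail ((hasSum_cosh t).mul_left (t ^ 3 / 6))
  have hfact : ((2 * n)! : ℝ) * 6 ≤ (2 * n + 3)! := by
    exact_mod_cast Nat.le_of_dvd (factorial_pos _) (factorial_mul_factorial_dvd_factorial_add _ 3)
  calc t ^ (2 * n + 3) / ↑(2 * n + 3)! ≤ t ^ (2 * n + 3) / (↑(2 * n)! * 6) := by gcongr
    _ = t ^ 3 / 6 * (t ^ (2 * n) / ↑(2 * n)!) := by ring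

theorem cosh_le_exp {x : ℝ} (hx : 0 ≤ x) : cosh x ≤ exp x := by
  rw [cosh_eq]
  linarith [exp_le_exp.mpr (show -x ≤ x by linarith)]

theorem abs_sinh_div_sinh_sub_div_le {t T : ℝ} (ht : 0 ≤ t) (htT : t ≤ T) :
    |sinh t / sinh T - t / T| ≤ T ^ 2 / 6 * cosh T := by
  rcases ht.eq_or_lt with rfl | ht'
  · rw [sinh_zero, zero_div, zero_div, sub_zero, abs_zero]
    positivity
  have hT : 0 < T := ht'.trans_le htT
  have hT_le_sinh : T ≤ sinh T := self_le_sinh_iff.mpr hT.le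
  have hsinh_pos : 0 < sinh T := hT.trans_le hT_le_sinh
  have hcosh : cosh t ≤ cosh T := cosh_le_cosh.mpr (by rwa [abs_of_nonneg ht, abs_of_pos hT])
  have hnum : |(sinh t - t) * T - (sinh T - T) * t| ≤ T ^ 4 / 6 * cosh T := by
    apply abs_sub_le_of_nonneg_of_le
    · exact mul_nonneg (sub_nonneg.mpr (self_le_sinh_iff.mpr ht)) hT.le
    · calc (sinh t - t) * T ≤ t ^ 3 / 6 * cosh t * T := by
            gcongr; exact sinh_sub_self_le_mul_cosh ht
        _ ≤ T ^ 3 / 6 * cosh T * T := by gcongr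
        _ = T ^ 4 / 6 * cosh T := by ring
    · exact mul_nonneg (sub_nonneg.mpr hT_le_sinh) ht
    · calc (sinh T - T) * t ≤ T ^ 3 / 6 * cosh T * T := by
            gcongr; exact sinh_sub_self_le_mul_cosh hT.le
        _ = T ^ 4 / 6 * cosh T := by ring
  have hden : T ^ 2 ≤ sinh T * T := by nlinarith
  calc |sinh t / sinh T - t / T|
      = |(sinh t - t) * T - (sinh T - T) * t| / (sinh T * T) := by
        rw [div_sub_div _ _ hsinh_pos.ne' hT.ne', abs_div, abs_of_pos (mul_pos hsinh_pos hT)]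
        congr 2
        ring
    _ ≤ T ^ 4 / 6 * cosh T / T ^ 2 := div_le_div₀ (by positivity) hnum (by positivity) hden
    _ = T ^ 2 / 6 * cosh T := by field_simp

theorem cardinal_vs_tent_general (ε a b : ℝ) (hε : 0 < ε) :
    ∀ x ∈ Set.Icc a b,
      |Real.sinh (ε * (x - a)) / Real.sinh (ε * (b - a)) - (x - a) / (b - a)| ≤
        ε ^ 2 * (b - a) ^ 2 / 3 * Real.exp (ε * (b - a)) := by
  rintro x ⟨hax, hxb⟩
  have hT : 0 ≤ ε * (b - a) := mul_nonneg hε.le (sub_nonneg.mpr (hax.trans hxb))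
  rw [← mul_div_mul_left (x - a) (b - a) hε.ne']
  calc _ ≤ (ε * (b - a)) ^ 2 / 6 * cosh (ε * (b - a)) :=
        abs_sinh_div_sinh_sub_div_le (mul_nonneg hε.le (sub_nonneg.mpr hax)) (by gcongr)
    _ ≤ ε ^ 2 * (b - a) ^ 2 / 3 * exp (ε * (b - a)) := by
        have hcosh_le := cosh_le_exp hT
        rw [mul_pow]
        gcongr
        norm_num

theorem cardinal_vs_tent (ε a b : ℝ) (hε : 0 < ε) (ha : 0 ≤ a) (hab : a < b)
    (hb : b ≤ 1) :
    ∀ x ∈ Set.Icc a b,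
      |Real.sinh (ε * (x - a)) / Real.sinh (ε * (b - a)) - (x - a) / (b - a)| ≤
        ε ^ 2 * (b - a) ^ 2 / 3 * Real.exp (ε * (b - a)) :=
  cardinal_vs_tent_general ε a b hε
end
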